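/- Suppose X_1, X_2, ... are iid random vectors in ℝ^d with mean μ and E‖X − μ‖² = σ² < ∞, and let X̄_{i−1} = (1/(i−1))Σ_{j<i} X_j denote the running sample mean (X̄_0 := 0). Then σ̂_n² := (1/n)Σ_{i=1}^n ‖X_i − X̄_{i−1}‖² converges to σ² almost surely as n → ∞. -/

import Mathlib

/-! Write `X i - Xbar i = (X i - μ) + (μ - Xbar i)`. The Cesàro mean of `‖X i - Xbar i‖ ^ 2` then
splits into the mean of `‖X i - μ‖ ^ 2`, which tends to `σ2` by the strong law, a cross term and the
mean of `‖μ - Xbar i‖ ^ 2`. Both remainders vanish because `Xbar i → μ` almost surely (the strong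
law again): the last one as a Cesàro mean of a null sequence, the cross term by Cauchy–Schwarz. -/

open MeasureTheory ProbabilityTheory Filter Finset Topology

open scoped RealInnerProductSpace

theorem tendsto_cesaro_mul_of_tendsto_zero {a c : ℕ → ℝ} {L : ℝ}
    (ha : Tendsto (fun n : ℕ => (n : ℝ)⁻¹ * ∑ i ∈ range n, a i ^ 2) atTop (𝓝 L))
    (hc : Tendsto c atTop (𝓝 0)) :
    Tendsto (fun n : ℕ => (n : ℝ)⁻¹ * ∑ i ∈ range n, a i * c i) atTop (𝓝 0) := by
  have hc2 : Tendsto (fun n : ℕ => (n : ℝ)⁻¹ * ∑ i ∈ range n, c i ^ 2) atTop (𝓝 0) := by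
    simpa using (hc.pow 2).cesaro
  have hsq : Tendsto (fun n : ℕ => ((n : ℝ)⁻¹ * ∑ i ∈ range n, a i * c i) ^ 2) atTop (𝓝 0) := by
    refine squeeze_zero (fun n => sq_nonneg _) (fun n => ?_) (by simpa using ha.mul hc2)
    calc ((n : ℝ)⁻¹ * ∑ i ∈ range n, a i * c i) ^ 2
        = (n : ℝ)⁻¹ ^ 2 * (∑ i ∈ range n, a i * c i) ^ 2 := by ring
      _ ≤ (n : ℝ)⁻¹ ^ 2 * ((∑ i ∈ range n, a i ^ 2) * ∑ i ∈ range n, c i ^ 2) := by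
        gcongr; exact sum_mul_sq_le_sq_mul_sq _ _ _
      _ = ((n : ℝ)⁻¹ * ∑ i ∈ range n, a i ^ 2) * ((n : ℝ)⁻¹ * ∑ i ∈ range n, c i ^ 2) := by
        ring
  refine squeeze_zero_norm (fun n => (Real.sqrt_sq_eq_abs _).ge) ?_
  simpa using hsq.sqrt

theorem tendsto_cesaro_inner_of_tendsto_zero {E : Type*} [NormedAddCommGroup E]
    [InnerProductSpace ℝ E] {u v : ℕ → E} {L : ℝ}
    (hu : Tendsto (fun n : ℕ => (n : ℝ)⁻¹ * ∑ i ∈ range n, ‖u i‖ ^ 2) atTop (𝓝 L))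
    (hv : Tendsto v atTop (𝓝 0)) :
    Tendsto (fun n : ℕ => (n : ℝ)⁻¹ * ∑ i ∈ range n, ⟪u i, v i⟫) atTop (𝓝 0) := by
  refine squeeze_zero_norm (fun n => ?_)
    (tendsto_cesaro_mul_of_tendsto_zero hu (by simpa using hv.norm))
  rw [norm_mul, Real.norm_of_nonneg (by positivity)]
  gcongr
  exact (norm_sum_le _ _).trans (sum_le_sum fun i _ => norm_inner_le_norm _ _)

theorem tendsto_cesaro_norm_sub_sq_of_tendsto {E : Type*} [NormedAddCommGroup E]
    [InnerProductSpace ℝ E] {x m : ℕ → E} {μ : E} {σ2 : ℝ}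
    (hx : Tendsto (fun n : ℕ => (n : ℝ)⁻¹ * ∑ i ∈ range n, ‖x i - μ‖ ^ 2) atTop (𝓝 σ2))
    (hm : Tendsto m atTop (𝓝 μ)) :
    Tendsto (fun n : ℕ => (n : ℝ)⁻¹ * ∑ i ∈ range n, ‖x i - m i‖ ^ 2) atTop (𝓝 σ2) := by
  have hgap : Tendsto (fun i => μ - m i) atTop (𝓝 0) := by
    simpa using (tendsto_const_nhds (x := μ)).sub hm
  have hcross := tendsto_cesaro_inner_of_tendsto_zero hx hgap
  have hrem : Tendsto (fun n : ℕ => (n : ℝ)⁻¹ * ∑ i ∈ range n, ‖μ - m i‖ ^ 2) atTop (𝓝 0) := by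
    simpa using (hgap.norm.pow 2).cesaro
  have hsplit : ∀ n : ℕ, (n : ℝ)⁻¹ * ∑ i ∈ range n, ‖x i - m i‖ ^ 2 =
      (n : ℝ)⁻¹ * ∑ i ∈ range n, ‖x i - μ‖ ^ 2
        + 2 * ((n : ℝ)⁻¹ * ∑ i ∈ range n, ⟪x i - μ, μ - m i⟫)
        + (n : ℝ)⁻¹ * ∑ i ∈ range n, ‖μ - m i‖ ^ 2 := by
    intro n
    have hterm : ∀ i, ‖x i - m i‖ ^ 2 =
        ‖x i - μ‖ ^ 2 + 2 * ⟪x i - μ, μ - m i⟫ + ‖μ - m i‖ ^ 2 := fun i => by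
      rw [← norm_add_sq_real, sub_add_sub_cancel]
    simp only [hterm, sum_add_distrib, ← mul_sum]
    ring
  simpa [hsplit] using (hx.add (hcross.const_mul 2)).add hrem

theorem empirical_variance_proxy_tendsto {d : ℕ} {Ω : Type*} [MeasurableSpace Ω]
    (P : Measure Ω) [IsProbabilityMeasure P]
    (X : ℕ → Ω → EuclideanSpace ℝ (Fin d))
    (hindep : iIndepFun X P)
    (hident : ∀ i, IdentDistrib (X i) (X 0) P P)
    (hint : Integrable (X 0) P)
    (μ : EuclideanSpace ℝ (Fin d)) (hμ : μ = ∫ ω, X 0 ω ∂P)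
    (σ2 : ℝ) (hσ2 : σ2 = ∫ ω, ‖X 0 ω - μ‖ ^ 2 ∂P)
    (hsq : Integrable (fun ω => ‖X 0 ω - μ‖ ^ 2) P)
    -- running sample means: `Xbar i ω` is the mean of `X 0 ω, ..., X (i-1) ω` (zero for `i = 0`)
    (Xbar : ℕ → Ω → EuclideanSpace ℝ (Fin d))
    (hXbar : ∀ i ω, Xbar i ω = (i : ℝ)⁻¹ • ∑ j ∈ Finset.range i, X j ω) :
    ∀ᵐ ω ∂P, Tendsto
      (fun n : ℕ => (n : ℝ)⁻¹ * ∑ i ∈ Finset.range n, ‖X i ω - Xbar i ω‖ ^ 2)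
      atTop (nhds σ2) := by
  have hφ : Measurable fun x : EuclideanSpace ℝ (Fin d) => ‖x - μ‖ ^ 2 := by fun_prop
  have hdev := strong_law_ae (fun i ω => ‖X i ω - μ‖ ^ 2) hsq
    (fun i j hij => (hindep.indepFun hij).comp hφ hφ) (fun i => (hident i).comp hφ)
  have hmean := strong_law_ae X hint (fun i j hij => hindep.indepFun hij) hident
  filter_upwards [hdev, hmean] with ω hdevω hmeanω
  subst hσ2 hμ
  refine tendsto_cesaro_norm_sub_sq_of_tendsto (by simpa using hdevω) ?_
  simpa only [hXbar] using hmeanω
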